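/- For every n ≥ 1 and every R > 0 there exists a constant C > 0 such that for every ε > 0 and every smooth function u on ℝ^{2n+1} with compact support contained in the Euclidean ball of radius R centered at the origin, one has n ∫_{ℝ^{2n+1}} |∇^H u|² dg ≤ C((1 + 1/ε) ∫_{ℝ^{2n+1}} (Δ_H u)² dg + ε ∫_{ℝ^{2n+1}} (Tu)² dg), where dg denotes Lebesgue measure. -/

import Mathlib

open scoped BigOperators
noncomputable section

/-- The Heisenberg group ℍⁿ identified with ℝⁿ × ℝⁿ × ℝ, with coordinates (x, y, t). -/
abbrev Heis (n : ℕ) : Type := (Fin n → ℝ) × (Fin n → ℝ) × ℝ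

/-- The left-invariant horizontal vector fields `X_1, …, X_{2n}` acting on functions:
`X_j u = ∂u/∂x_j − (y_j/2) ∂u/∂t` for `j = 1,…,n` (indices `0,…,n-1` here) and
`X_{n+j} u = ∂u/∂y_j + (x_j/2) ∂u/∂t` (indices `n,…,2n-1`). -/
noncomputable def Xf (n : ℕ) (i : Fin (2 * n)) (u : Heis n → ℝ) (p : Heis n) : ℝ :=
  if h : (i : ℕ) < n then
    fderiv ℝ u p (Pi.single ⟨(i : ℕ), h⟩ 1, 0, 0)
      - p.2.1 ⟨(i : ℕ), h⟩ / 2 * fderiv ℝ u p (0, 0, 1)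
  else
    fderiv ℝ u p (0, Pi.single ⟨(i : ℕ) - n, by have := i.isLt; omega⟩ 1, 0)
      + p.1 ⟨(i : ℕ) - n, by have := i.isLt; omega⟩ / 2 * fderiv ℝ u p (0, 0, 1)

/-- The vertical vector field `T u = ∂u/∂t`. -/
noncomputable def Tf (n : ℕ) (u : Heis n → ℝ) (p : Heis n) : ℝ :=
  fderiv ℝ u p (0, 0, 1)

/-- The horizontal Laplacian `Δ_H u = Σ_{i=1}^{2n} X_i (X_i u)`. -/
noncomputable def ΔH (n : ℕ) (u : Heis n → ℝ) (p : Heis n) : ℝ :=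
  ∑ i : Fin (2 * n), Xf n i (Xf n i u) p

/-!
The fields `X_i` are divergence free, so integrating by parts gives
`∫ |∇^H u|² = -∫ u Δ_H u`, which Young's inequality bounds by
`δ/2 ∫ u² + 1/(2δ) ∫ (Δ_H u)²`. Since `u` vanishes where `|t| > R`, writing
`∫ u² = ∫ ∂_t(t) u² = -∫ 2 t u Tu` gives the Poincaré inequality `∫ u² ≤ 4R² ∫ (Tu)²`.
The choice `δ = ε / (4R²)` yields the bound with `C = n (2R² + 1)`.
-/

open MeasureTheory
open scoped ContDiff

theorem HasCompactSupport.fun_pow {α M : Type*} [TopologicalSpace α] [MonoidWithZero M]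
    {f : α → M} (hf : HasCompactSupport f) {k : ℕ} (hk : k ≠ 0) :
    HasCompactSupport fun x ↦ f x ^ k :=
  hf.comp_left (g := (· ^ k)) (zero_pow hk)

theorem HasCompactSupport.fderiv_apply_field {𝕜 E F : Type*} [NontriviallyNormedField 𝕜]
    [NormedAddCommGroup E] [NormedSpace 𝕜 E] [NormedAddCommGroup F] [NormedSpace 𝕜 F]
    {f : E → F} (hf : HasCompactSupport f) (V : E → E) :
    HasCompactSupport fun p ↦ fderiv 𝕜 f p (V p) :=
  (hf.fderiv (𝕜 := 𝕜)).mono fun p hp h0 ↦ hp (by simp [h0])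

section IntegrationByParts

variable {E : Type*} [NormedAddCommGroup E] [NormedSpace ℝ E] [FiniteDimensional ℝ E]
  [MeasurableSpace E] [BorelSpace E] {μ : Measure E} [μ.IsAddHaarMeasure]

theorem integral_fderiv_apply_eq_zero {F : E → ℝ} (hF : ContDiff ℝ 1 F)
    (hc : HasCompactSupport F) (v : E) :
    ∫ p, fderiv ℝ F p v ∂μ = 0 := by
  have h := integral_mul_fderiv_eq_neg_fderiv_mul_of_integrable (μ := μ)
    (f := fun _ ↦ (1 : ℝ)) (g := F) (v := v) (by simp)
    (by simpa using ((hF.continuous_fderiv one_ne_zero).clm_apply continuous_const)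
      |>.integrable_of_hasCompactSupport (hc.fderiv_apply (𝕜 := ℝ) v))
    (by simpa using hF.continuous.integrable_of_hasCompactSupport hc)
    (fun _ _ ↦ differentiableAt_const _) (fun x _ ↦ hF.differentiable_one x)
  simpa using h

theorem integral_clm_mul_fderiv_apply {F : E → ℝ} (hF : ContDiff ℝ 1 F)
    (hc : HasCompactSupport F) (ℓ : E →L[ℝ] ℝ) (v : E) :
    ∫ p, ℓ p * fderiv ℝ F p v ∂μ = -(ℓ v * ∫ p, F p ∂μ) := by
  have hF_int : Integrable F μ := hF.continuous.integrable_of_hasCompactSupport hc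
  rw [integral_mul_fderiv_eq_neg_fderiv_mul_of_integrable (by simpa using hF_int.const_mul (ℓ v))
    ((ℓ.continuous.mul ((hF.continuous_fderiv one_ne_zero).clm_apply continuous_const))
      |>.integrable_of_hasCompactSupport (hc.fderiv_apply (𝕜 := ℝ) v).mul_left)
    ((ℓ.continuous.mul hF.continuous).integrable_of_hasCompactSupport hc.mul_left)
    (fun _ _ ↦ ℓ.differentiableAt) (fun x _ ↦ hF.differentiable_one x)]
  simp [integral_const_mul]

/-- The affine vector field `p ↦ v + ℓ p • w` has divergence `ℓ w`. -/
theorem integral_fderiv_apply_affine_eq_zero {F : E → ℝ} (hF : ContDiff ℝ 1 F)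
    (hc : HasCompactSupport F) (v w : E) {ℓ : E →L[ℝ] ℝ} (hℓ : ℓ w = 0) :
    ∫ p, fderiv ℝ F p (v + ℓ p • w) ∂μ = 0 := by
  have hderiv : Continuous fun p ↦ fderiv ℝ F p := hF.continuous_fderiv one_ne_zero
  have hv : Integrable (fun p ↦ fderiv ℝ F p v) μ :=
    (hderiv.clm_apply continuous_const).integrable_of_hasCompactSupport
      (hc.fderiv_apply (𝕜 := ℝ) v)
  have hw : Integrable (fun p ↦ ℓ p * fderiv ℝ F p w) μ :=
    (ℓ.continuous.mul (hderiv.clm_apply continuous_const)).integrable_of_hasCompactSupport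
      (hc.fderiv_apply (𝕜 := ℝ) w).mul_left
  simp only [map_add, map_smul, smul_eq_mul]
  rw [integral_add hv hw, integral_fderiv_apply_eq_zero hF hc,
    integral_clm_mul_fderiv_apply hF hc, hℓ]
  simp

theorem integral_fderiv_apply_affine_mul {f g : E → ℝ} (hf : ContDiff ℝ 1 f)
    (hg : ContDiff ℝ 1 g) (hc : HasCompactSupport f) (v w : E) {ℓ : E →L[ℝ] ℝ}
    (hℓ : ℓ w = 0) :
    ∫ p, fderiv ℝ f p (v + ℓ p • w) * g p ∂μ
      = -∫ p, f p * fderiv ℝ g p (v + ℓ p • w) ∂μ := by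
  have hV : Continuous fun p ↦ v + ℓ p • w := by fun_prop
  have hf'g : Integrable (fun p ↦ fderiv ℝ f p (v + ℓ p • w) * g p) μ :=
    (((hf.continuous_fderiv one_ne_zero).clm_apply hV).mul hg.continuous)
      |>.integrable_of_hasCompactSupport (hc.fderiv_apply_field _).mul_right
  have hfg' : Integrable (fun p ↦ f p * fderiv ℝ g p (v + ℓ p • w)) μ :=
    (hf.continuous.mul ((hg.continuous_fderiv one_ne_zero).clm_apply hV))
      |>.integrable_of_hasCompactSupport hc.mul_right
  have hsum : ∫ p, (fderiv ℝ f p (v + ℓ p • w) * g p + f p * fderiv ℝ g p (v + ℓ p • w)) ∂μ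
      = 0 := by
    rw [← integral_fderiv_apply_affine_eq_zero (μ := μ) (hf.mul hg) hc.mul_right v w hℓ]
    congr with p
    rw [fderiv_fun_mul (hf.differentiable_one p) (hg.differentiable_one p)]
    simp only [add_apply, smul_apply, smul_eq_mul]
    ring
  rw [integral_add hf'g hfg'] at hsum
  linarith

theorem integral_sq_le_of_clm_apply_eq_one {u : E → ℝ} (hu : ContDiff ℝ 1 u)
    (hc : HasCompactSupport u) {ℓ : E →L[ℝ] ℝ} {w : E} (hw : ℓ w = 1) {R : ℝ}
    (hR : ∀ p, R < |ℓ p| → u p = 0) :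
    ∫ p, u p ^ 2 ∂μ ≤ 4 * R ^ 2 * ∫ p, fderiv ℝ u p w ^ 2 ∂μ := by
  have hu' : Continuous fun p ↦ fderiv ℝ u p w :=
    (hu.continuous_fderiv one_ne_zero).clm_apply continuous_const
  have hu2 : Integrable (fun p ↦ u p ^ 2) μ :=
    (hu.continuous.pow 2).integrable_of_hasCompactSupport (hc.fun_pow two_ne_zero)
  have hu'2 : Integrable (fun p ↦ fderiv ℝ u p w ^ 2) μ :=
    (hu'.pow 2).integrable_of_hasCompactSupport
      ((hc.fderiv_apply (𝕜 := ℝ) w).fun_pow two_ne_zero)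
  have hcross : Integrable (fun p ↦ ℓ p * (2 * u p * fderiv ℝ u p w)) μ :=
    (ℓ.continuous.mul ((continuous_const.mul hu.continuous).mul hu'))
      |>.integrable_of_hasCompactSupport (hc.mono fun p hp h0 ↦ hp (by simp [h0]))
  -- `∂_w ℓ = 1`, so integrating `ℓ ∂_w (u²)` by parts gives back `∫ u²`.
  have hsq : ∫ p, u p ^ 2 ∂μ = -∫ p, ℓ p * (2 * u p * fderiv ℝ u p w) ∂μ := by
    have h := integral_clm_mul_fderiv_apply (μ := μ) (hu.pow 2)
      (hc.fun_pow two_ne_zero) ℓ w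
    simp only [fderiv_fun_pow 2 (hu.differentiable_one _), hw, smul_apply, nsmul_eq_mul,
      smul_eq_mul, pow_one, Nat.cast_ofNat, one_mul, Nat.add_one_sub_one] at h
    rw [h, neg_neg]
  have hpt : ∀ p, -(ℓ p * (2 * u p * fderiv ℝ u p w))
      ≤ 1 / 2 * u p ^ 2 + 2 * R ^ 2 * fderiv ℝ u p w ^ 2 := by
    intro p
    by_cases hp : R < |ℓ p|
    · simp [hR p hp]
      positivity
    · obtain ⟨hlo, hhi⟩ := abs_le.mp (not_lt.mp hp)
      have hℓR : ℓ p ^ 2 ≤ R ^ 2 := sq_le_sq' hlo hhi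
      nlinarith [sq_nonneg (u p + 2 * ℓ p * fderiv ℝ u p w),
        mul_le_mul_of_nonneg_right hℓR (sq_nonneg (fderiv ℝ u p w))]
  have hle : ∫ p, u p ^ 2 ∂μ
      ≤ 1 / 2 * ∫ p, u p ^ 2 ∂μ + 2 * R ^ 2 * ∫ p, fderiv ℝ u p w ^ 2 ∂μ := calc
    _ = ∫ p, -(ℓ p * (2 * u p * fderiv ℝ u p w)) ∂μ := by rw [integral_neg, hsq]
    _ ≤ ∫ p, (1 / 2 * u p ^ 2 + 2 * R ^ 2 * fderiv ℝ u p w ^ 2) ∂μ :=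
      integral_mono hcross.neg ((hu2.const_mul _).add (hu'2.const_mul _)) hpt
    _ = _ := by
      rw [integral_add (hu2.const_mul _) (hu'2.const_mul _), integral_const_mul,
        integral_const_mul]
  linarith

end IntegrationByParts

theorem neg_integral_mul_le {α : Type*} [MeasurableSpace α] {μ : Measure α} {f g : α → ℝ}
    (hf : MemLp f 2 μ) (hg : MemLp g 2 μ) {δ : ℝ} (hδ : 0 < δ) :
    -∫ x, f x * g x ∂μ ≤ δ / 2 * ∫ x, f x ^ 2 ∂μ + 1 / (2 * δ) * ∫ x, g x ^ 2 ∂μ := by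
  have hpt : ∀ x, -(f x * g x) ≤ δ / 2 * f x ^ 2 + 1 / (2 * δ) * g x ^ 2 := by
    intro x
    have h := sq_nonneg (δ * f x + g x)
    field_simp
    nlinarith
  rw [← integral_neg, ← integral_const_mul, ← integral_const_mul,
    ← integral_add (hf.integrable_sq.const_mul _) (hg.integrable_sq.const_mul _)]
  exact integral_mono (hf.integrable_mul hg).neg
    ((hf.integrable_sq.const_mul _).add (hg.integrable_sq.const_mul _)) hpt

-- Instance search does not find these through the nested products.
instance (n : ℕ) : (volume : Measure ((Fin n → ℝ) × ℝ)).IsAddHaarMeasure :=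
  Measure.prod.instIsAddHaarMeasure _ _

instance (n : ℕ) : (volume : Measure (Heis n)).IsAddHaarMeasure :=
  Measure.prod.instIsAddHaarMeasure _ _

namespace Heis

variable {n : ℕ}

theorem exists_Xf_eq_fderiv_apply_affine (i : Fin (2 * n)) :
    ∃ (v : Heis n) (ℓ : Heis n →L[ℝ] ℝ), ℓ (0, 0, 1) = 0 ∧
      ∀ u p, Xf n i u p = fderiv ℝ u p (v + ℓ p • (0, 0, 1)) := by
  by_cases h : (i : ℕ) < n
  · refine ⟨(Pi.single ⟨i, h⟩ 1, 0, 0), -(1 / 2 : ℝ) • (ContinuousLinearMap.proj ⟨i, h⟩ ∘L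
      ContinuousLinearMap.fst ℝ _ ℝ ∘L ContinuousLinearMap.snd ℝ _ _), by simp, fun u p ↦ ?_⟩
    simp only [Xf, dif_pos h, map_add, map_smul, smul_apply, ContinuousLinearMap.comp_apply,
      ContinuousLinearMap.proj_apply, ContinuousLinearMap.coe_fst', ContinuousLinearMap.coe_snd',
      smul_eq_mul]
    ring
  · refine ⟨(0, Pi.single ⟨i - n, by omega⟩ 1, 0), (1 / 2 : ℝ) • (ContinuousLinearMap.proj
      ⟨i - n, by omega⟩ ∘L ContinuousLinearMap.fst ℝ _ _), by simp, fun u p ↦ ?_⟩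
    simp only [Xf, dif_neg h, map_add, map_smul, smul_apply, ContinuousLinearMap.comp_apply,
      ContinuousLinearMap.proj_apply, ContinuousLinearMap.coe_fst', smul_eq_mul]
    ring

theorem contDiff_Xf {u : Heis n → ℝ} (hu : ContDiff ℝ ∞ u) (i : Fin (2 * n)) :
    ContDiff ℝ ∞ (Xf n i u) := by
  obtain ⟨v, ℓ, -, hX⟩ := exists_Xf_eq_fderiv_apply_affine i
  rw [funext (hX u)]
  exact (hu.fderiv_right (by simp)).clm_apply (by fun_prop)

theorem hasCompactSupport_Xf {u : Heis n → ℝ} (hc : HasCompactSupport u) (i : Fin (2 * n)) :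
    HasCompactSupport (Xf n i u) := by
  obtain ⟨v, ℓ, -, hX⟩ := exists_Xf_eq_fderiv_apply_affine i
  rw [funext (hX u)]
  exact hc.fderiv_apply_field _

theorem integral_Xf_mul {f g : Heis n → ℝ} (hf : ContDiff ℝ 1 f) (hg : ContDiff ℝ 1 g)
    (hc : HasCompactSupport f) (i : Fin (2 * n)) :
    ∫ p, Xf n i f p * g p = -∫ p, f p * Xf n i g p := by
  obtain ⟨v, ℓ, hℓ, hX⟩ := exists_Xf_eq_fderiv_apply_affine i
  simp only [hX]
  exact integral_fderiv_apply_affine_mul hf hg hc v _ hℓ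

theorem contDiff_ΔH {u : Heis n → ℝ} (hu : ContDiff ℝ ∞ u) : ContDiff ℝ ∞ (ΔH n u) :=
  ContDiff.sum fun i _ ↦ contDiff_Xf (contDiff_Xf hu i) i

theorem hasCompactSupport_ΔH {u : Heis n → ℝ} (hc : HasCompactSupport u) :
    HasCompactSupport (ΔH n u) := by
  have hsum : ΔH n u = ∑ i, Xf n i (Xf n i u) := by
    ext p
    simp [ΔH]
  rw [hsum]
  exact HasCompactSupport.finset_sum fun i _ ↦ hasCompactSupport_Xf (hasCompactSupport_Xf hc i) i

theorem integral_sum_sq_Xf {u : Heis n → ℝ} (hu : ContDiff ℝ ∞ u) (hc : HasCompactSupport u) :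
    ∫ p, ∑ i, Xf n i u p ^ 2 = -∫ p, u p * ΔH n u p := by
  have hsq_int (i : Fin (2 * n)) : Integrable fun p ↦ Xf n i u p ^ 2 :=
    ((contDiff_Xf hu i).continuous.pow 2).integrable_of_hasCompactSupport
      ((hasCompactSupport_Xf hc i).fun_pow two_ne_zero)
  have hmul_int (i : Fin (2 * n)) : Integrable fun p ↦ u p * Xf n i (Xf n i u) p :=
    (hu.continuous.mul (contDiff_Xf (contDiff_Xf hu i) i).continuous)
      |>.integrable_of_hasCompactSupport hc.mul_right
  have hsq (i : Fin (2 * n)) :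
      ∫ p, Xf n i u p ^ 2 = -∫ p, u p * Xf n i (Xf n i u) p := by
    simpa only [sq] using integral_Xf_mul (hu.of_le (by simp))
      ((contDiff_Xf hu i).of_le (by simp)) hc i
  simp only [ΔH, Finset.mul_sum]
  rw [integral_finsetSum _ fun i _ ↦ hsq_int i, integral_finsetSum _ fun i _ ↦ hmul_int i,
    ← Finset.sum_neg_distrib]
  exact Finset.sum_congr rfl fun i _ ↦ hsq i

end Heis

open Heis

/-- For every n ≥ 1 and R > 0 there is C > 0 such that for all ε > 0 and all
u ∈ C_c^∞(ℝ^{2n+1}) supported in the Euclidean ball of radius R about the origin: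
n ∫ |∇^H u|² ≤ C ((1 + 1/ε) ∫ (Δ_H u)² + ε ∫ (Tu)²). -/
theorem heisenberg_gradient_apriori_bound (n : ℕ) (hn : 1 ≤ n) (R : ℝ) (hR : 0 < R) :
    ∃ C : ℝ, 0 < C ∧ ∀ ε : ℝ, 0 < ε → ∀ u : Heis n → ℝ,
      ContDiff ℝ (⊤ : ℕ∞) u → HasCompactSupport u →
      (∀ p : Heis n,
        R ^ 2 < (∑ i : Fin n, (p.1 i) ^ 2) + (∑ i : Fin n, (p.2.1 i) ^ 2) + p.2.2 ^ 2 →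
        u p = 0) →
      (n : ℝ) * ∫ p : Heis n, ∑ i : Fin (2 * n), (Xf n i u p) ^ 2
        ≤ C * ((1 + 1 / ε) * (∫ p : Heis n, (ΔH n u p) ^ 2)
            + ε * ∫ p : Heis n, (Tf n u p) ^ 2) := by
  refine ⟨n * (2 * R ^ 2 + 1), mul_pos (by exact_mod_cast hn) (by positivity),
    fun ε hε u hu hc hsupp ↦ ?_⟩
  have hslab (p : Heis n) (hp : R < |p.2.2|) : u p = 0 := by
    refine hsupp p ?_
    have hx : 0 ≤ ∑ i, p.1 i ^ 2 := by positivity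
    have hy : 0 ≤ ∑ i, p.2.1 i ^ 2 := by positivity
    have ht : R ^ 2 < p.2.2 ^ 2 := by simpa using (sq_lt_sq₀ hR.le (abs_nonneg _)).2 hp
    linarith
  have hpoincare : ∫ p, u p ^ 2 ≤ 4 * R ^ 2 * ∫ p, Tf n u p ^ 2 :=
    integral_sq_le_of_clm_apply_eq_one (hu.of_le (by simp)) hc
      (ℓ := ContinuousLinearMap.snd ℝ _ ℝ ∘L ContinuousLinearMap.snd ℝ _ _) rfl hslab
  have hyoung : -∫ p, u p * ΔH n u p ≤ ε / (4 * R ^ 2) / 2 * (∫ p, u p ^ 2)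
      + 1 / (2 * (ε / (4 * R ^ 2))) * ∫ p, ΔH n u p ^ 2 :=
    neg_integral_mul_le (hu.continuous.memLp_of_hasCompactSupport hc)
      ((contDiff_ΔH hu).continuous.memLp_of_hasCompactSupport (hasCompactSupport_ΔH hc))
      (δ := ε / (4 * R ^ 2)) (by positivity)
  have hA : 0 ≤ ∫ p, ΔH n u p ^ 2 := integral_nonneg fun p ↦ sq_nonneg _
  have hB : 0 ≤ ∫ p, Tf n u p ^ 2 := integral_nonneg fun p ↦ sq_nonneg _
  rw [integral_sum_sq_Xf hu hc, mul_assoc]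
  gcongr
  calc _ ≤ ε / (4 * R ^ 2) / 2 * (∫ p, u p ^ 2)
          + 1 / (2 * (ε / (4 * R ^ 2))) * ∫ p, ΔH n u p ^ 2 := hyoung
    _ ≤ ε / (4 * R ^ 2) / 2 * (4 * R ^ 2 * ∫ p, Tf n u p ^ 2)
          + 1 / (2 * (ε / (4 * R ^ 2))) * ∫ p, ΔH n u p ^ 2 := by gcongr
    _ = 1 / 2 * (ε * ∫ p, Tf n u p ^ 2) + 2 * R ^ 2 * (1 / ε * ∫ p, ΔH n u p ^ 2) := by
        field_simp
        ring
    _ ≤ (2 * R ^ 2 + 1) * (ε * ∫ p, Tf n u p ^ 2)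
          + (2 * R ^ 2 + 1) * ((1 + 1 / ε) * ∫ p, ΔH n u p ^ 2) := by
        gcongr <;> linarith [one_div_pos.2 hε, sq_nonneg R]
    _ = _ := by ring
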